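/- arXiv:1604.07656 — 2 statements merged into one kernel-verified Lean document; each statement's English description precedes it below -/
import Mathlib

section
/- Let {N_λ}_{λ ∈ Λ} be a nonempty chain (totally ordered by inclusion) of (k,n)-closed submodules of an R-module M. Then ⋂_{λ ∈ Λ} N_λ is a (k,n)-closed submodule of M. -/
/-! A counterexample to closedness of the intersection would give an index `i` where the first
alternative fails and an index `j` where the second fails; since the two alternatives are monotone
in the submodule, whichever of `N i`, `N j` is smaller fails both, contradicting its closedness. -/

theorem forall_or_forall_of_chain {α ι : Type*} [Preorder α] {N : ι → α}
    (hchain : ∀ i j, N i ≤ N j ∨ N j ≤ N i) {P Q : α → Prop} (hP : Monotone P) (hQ : Monotone Q)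
    (h : ∀ i, P (N i) ∨ Q (N i)) : (∀ i, P (N i)) ∨ ∀ i, Q (N i) := by
  by_contra! ⟨⟨i, hi⟩, ⟨j, hj⟩⟩
  rcases hchain i j with hij | hji
  · exact (h i).elim hi fun hQi => hj (hQ hij hQi)
  · exact (h j).elim (fun hPj => hi (hP hji hPj)) hj

namespace Submodule

variable {R M : Type*} [CommRing R] [AddCommGroup M] [Module R M]

def IsKNClosed (k n : ℕ) (N : Submodule R M) : Prop :=
  N ≠ ⊤ ∧ ∀ (r : R) (m : M), r ^ k • m ∈ N → (∀ x : M, r ^ n • x ∈ N) ∨ r ^ (n - 1) • m ∈ N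

theorem IsKNClosed.iInf_of_chain {k n : ℕ} {ι : Type*} [Nonempty ι] {N : ι → Submodule R M}
    (hchain : ∀ i j, N i ≤ N j ∨ N j ≤ N i) (hN : ∀ i, (N i).IsKNClosed k n) :
    (⨅ i, N i).IsKNClosed k n := by
  refine ⟨fun htop => ?_, fun r m hm => ?_⟩
  · obtain ⟨i⟩ := ‹Nonempty ι›
    exact (hN i).1 (iInf_eq_top.mp htop i)
  · simp only [mem_iInf] at hm ⊢
    have hor := forall_or_forall_of_chain hchain (P := fun L => ∀ x : M, r ^ n • x ∈ L)
      (Q := fun L => r ^ (n - 1) • m ∈ L) (fun _ _ hle hL x => hle (hL x)) (fun _ _ hle => @hle _)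
      fun i => (hN i).2 r m (hm i)
    exact hor.imp (fun h x i => h i x) id

end Submodule

theorem stmt_14_general {R M : Type*} [CommRing R] [AddCommGroup M] [Module R M]
    (k n : ℕ)
    {ι : Type*} [Nonempty ι] (N : ι → Submodule R M)
    (hchain : ∀ i j, N i ≤ N j ∨ N j ≤ N i)
    (hprop : ∀ i, N i ≠ ⊤)
    (hclosed : ∀ i, ∀ (r : R) (m : M), r ^ k • m ∈ N i →
        (∀ x : M, r ^ n • x ∈ N i) ∨ r ^ (n - 1) • m ∈ N i) :
    (⨅ i, N i) ≠ ⊤ ∧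
    ∀ (r : R) (m : M), r ^ k • m ∈ ⨅ i, N i →
      (∀ x : M, r ^ n • x ∈ ⨅ i, N i) ∨ r ^ (n - 1) • m ∈ ⨅ i, N i :=
  Submodule.IsKNClosed.iInf_of_chain hchain fun i => ⟨hprop i, hclosed i⟩

/-- The intersection of a nonempty chain of (k,n)-closed submodules
is a (k,n)-closed submodule. -/
theorem stmt_14 {R M : Type*} [CommRing R] [Nontrivial R] [AddCommGroup M] [Module R M]
    (k n : ℕ) (hk : 0 < k) (hn : 0 < n)
    {ι : Type*} [Nonempty ι] (N : ι → Submodule R M)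
    (hchain : ∀ i j, N i ≤ N j ∨ N j ≤ N i)
    (hprop : ∀ i, N i ≠ ⊤)
    (hclosed : ∀ i, ∀ (r : R) (m : M), r ^ k • m ∈ N i →
        (∀ x : M, r ^ n • x ∈ N i) ∨ r ^ (n - 1) • m ∈ N i) :
    (⨅ i, N i) ≠ ⊤ ∧
    ∀ (r : R) (m : M), r ^ k • m ∈ ⨅ i, N i →
      (∀ x : M, r ^ n • x ∈ ⨅ i, N i) ∨ r ^ (n - 1) • m ∈ ⨅ i, N i :=
  stmt_14_general k n N hchain hprop hclosed
end

section
/- Let N and K be proper submodules of an R-module M such that N is semi n₁-absorbing and K is semi n₂-absorbing, and let n = max{n₁, n₂}. Then N ∩ K is a semi (n+1)-absorbing submodule of M. -/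
/-- The paper's semi `k`-absorbing condition, without the properness of `N`. -/
def Submodule.IsSemiAbsorbing {R M : Type*} [CommRing R] [AddCommGroup M] [Module R M]
    (k : ℕ) (N : Submodule R M) : Prop :=
  ∀ (r : R) (m : M), r ^ k • m ∈ N → (∀ x : M, r ^ k • x ∈ N) ∨ r ^ (k - 1) • m ∈ N

namespace Submodule.IsSemiAbsorbing

variable {R M : Type*} [CommRing R] [AddCommGroup M] [Module R M] {N : Submodule R M} {k : ℕ}

theorem pow_smul_mem_of_pow_succ_smul_mem (h : N.IsSemiAbsorbing k) (hk : 0 < k) {n : ℕ}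
    (hkn : k ≤ n) {r : R} {m : M} (hm : r ^ (n + 1) • m ∈ N) : r ^ n • m ∈ N := by
  obtain ⟨j, rfl⟩ := Nat.exists_eq_add_of_le hkn
  have hsplit : r ^ k • r ^ (j + 1) • m ∈ N := by
    rwa [smul_smul, ← pow_add, ← add_assoc]
  rcases h r _ hsplit with hall | hlow
  · simpa only [smul_smul, ← pow_add] using hall (r ^ j • m)
  · rwa [smul_smul, ← pow_add, ← add_assoc, add_right_comm, Nat.sub_add_cancel hk] at hlow

end Submodule.IsSemiAbsorbing

theorem stmt_16_general {R M : Type*} [CommRing R] [AddCommGroup M] [Module R M]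
    (n₁ n₂ : ℕ) (hn₁ : 0 < n₁) (hn₂ : 0 < n₂)
    (N K : Submodule R M)
    (hNsa : ∀ (r : R) (m : M), r ^ n₁ • m ∈ N →
        (∀ x : M, r ^ n₁ • x ∈ N) ∨ r ^ (n₁ - 1) • m ∈ N)
    (hKsa : ∀ (r : R) (m : M), r ^ n₂ • m ∈ K →
        (∀ x : M, r ^ n₂ • x ∈ K) ∨ r ^ (n₂ - 1) • m ∈ K) :
    ∀ (r : R) (m : M), r ^ (max n₁ n₂ + 1) • m ∈ N ⊓ K →
      (∀ x : M, r ^ (max n₁ n₂ + 1) • x ∈ N ⊓ K) ∨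
        r ^ (max n₁ n₂ + 1 - 1) • m ∈ N ⊓ K := by
  intro r m hm
  right
  rw [Nat.add_sub_cancel]
  exact ⟨Submodule.IsSemiAbsorbing.pow_smul_mem_of_pow_succ_smul_mem hNsa hn₁
      (le_max_left _ _) hm.1,
    Submodule.IsSemiAbsorbing.pow_smul_mem_of_pow_succ_smul_mem hKsa hn₂
      (le_max_right _ _) hm.2⟩

/-- If N is semi n₁-absorbing and K is semi n₂-absorbing and
n = max n₁ n₂, then N ∩ K is semi (n+1)-absorbing. -/
theorem stmt_16 {R M : Type*} [CommRing R] [Nontrivial R] [AddCommGroup M] [Module R M]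
    (n₁ n₂ : ℕ) (hn₁ : 0 < n₁) (hn₂ : 0 < n₂)
    (N K : Submodule R M) (hN : N ≠ ⊤) (hK : K ≠ ⊤)
    (hNsa : ∀ (r : R) (m : M), r ^ n₁ • m ∈ N →
        (∀ x : M, r ^ n₁ • x ∈ N) ∨ r ^ (n₁ - 1) • m ∈ N)
    (hKsa : ∀ (r : R) (m : M), r ^ n₂ • m ∈ K →
        (∀ x : M, r ^ n₂ • x ∈ K) ∨ r ^ (n₂ - 1) • m ∈ K) :
    ∀ (r : R) (m : M), r ^ (max n₁ n₂ + 1) • m ∈ N ⊓ K →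
      (∀ x : M, r ^ (max n₁ n₂ + 1) • x ∈ N ⊓ K) ∨
        r ^ (max n₁ n₂ + 1 - 1) • m ∈ N ⊓ K :=
  stmt_16_general n₁ n₂ hn₁ hn₂ N K hNsa hKsa
end
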